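/- Let κ > 0, λ > 0 and let n ≥ 1 be an integer. If u₁ and u₂ are both S⁺ₙ-solutions of problem (P) for the same parameters (κ, λ), then u₁(x) = u₂(x) for all x ∈ [0,1]. -/

import Mathlib

/-!
The phase curve `t ↦ (u t, u' t)` of a solution solves an autonomous `C¹` system which conserves
the energy `(1 + κ u'²)^(-1/2) - κ λ u² / 2`, so solutions are determined by one point of their
phase curve. Reflection about a critical point and the antiperiodicity `u (x + z) = -u x`, both
consequences of this uniqueness, show that the zeros of an `S⁺ₙ`-solution are the multiples of its
first zero `z`, hence `z = 1 / n`, and that `u` rises monotonically to its peak at `T = 1 / (2n)`.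
On the energy level through a peak of height `ξ`, the slope of `u / ξ` at a given height `θ < 1`
strictly increases with `ξ`. So of two such solutions, the normalised profile `u / ξ` of the one
with the higher peak would climb from `0` to `1` strictly faster, which a sliding comparison rules
out. The two peaks agree, and
both phase curves pass through `(ξ, 0)` at time `T`.
-/

open Set Real Filter

noncomputable section

/-- `u` is twice continuously differentiable on `[a,b]`, satisfies
`1 + κ (u')² > 0` and the ODE `-u'' = λ u (1 + κ (u')²)^(3/2)` on `[a,b]`. -/
def SolODE (κ lam : ℝ) (u : ℝ → ℝ) (a b : ℝ) : Prop :=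
  (∀ x ∈ Set.Icc a b, DifferentiableAt ℝ u x) ∧
  (∀ x ∈ Set.Icc a b, DifferentiableAt ℝ (deriv u) x) ∧
  ContinuousOn (deriv (deriv u)) (Set.Icc a b) ∧
  (∀ x ∈ Set.Icc a b, 0 < 1 + κ * (deriv u x) ^ 2) ∧
  (∀ x ∈ Set.Icc a b,
    -(deriv (deriv u) x) = lam * u x * (1 + κ * (deriv u x) ^ 2) ^ ((3 : ℝ) / 2))

/-- `u` is a solution of problem (P) on `[0,1]` with Dirichlet boundary conditions. -/
def SolP (κ lam : ℝ) (u : ℝ → ℝ) : Prop :=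
  SolODE κ lam u 0 1 ∧ u 0 = 0 ∧ u 1 = 0

/-- `u` is an `S⁺ₙ`-solution of problem (P): a nontrivial solution with exactly
`n - 1` zeros in `(0,1)`, all zeros in `[0,1]` simple, and positive near `0`. -/
def SPlus (κ lam : ℝ) (n : ℕ) (u : ℝ → ℝ) : Prop :=
  SolP κ lam u ∧
  (∃ x ∈ Set.Icc (0 : ℝ) 1, u x ≠ 0) ∧
  {x ∈ Set.Ioo (0 : ℝ) 1 | u x = 0}.ncard = n - 1 ∧
  (∀ τ ∈ Set.Icc (0 : ℝ) 1, u τ = 0 → deriv u τ ≠ 0) ∧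
  (∃ δ > 0, ∀ x ∈ Set.Ioo (0 : ℝ) δ, 0 < u x)

/-- The constant `B = ∫₀¹ dθ/√(θ⁻⁴ - 1)`. -/
def Bconst : ℝ := ∫ θ in (0 : ℝ)..1, 1 / Real.sqrt ((θ ^ 4)⁻¹ - 1)

/-- The sup-norm of `u` over `[0,1]`. -/
def supNorm (u : ℝ → ℝ) : ℝ := sSup ((fun x => |u x|) '' Set.Icc (0 : ℝ) 1)

/-- The time map `J(λ, ξ) = √(-κ) ∫₀¹ ξ/√(1 - (1 - λκξ²(1-θ²)/2)⁻²) dθ`. -/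
def Jmap (κ lam ξ : ℝ) : ℝ :=
  Real.sqrt (-κ) *
    ∫ θ in (0 : ℝ)..1,
      ξ / Real.sqrt (1 - ((1 - lam * κ / 2 * ξ ^ 2 * (1 - θ ^ 2))⁻¹) ^ 2)

theorem eqOn_of_hasDerivAt_of_contDiff {E : Type*} [NormedAddCommGroup E] [NormedSpace ℝ E]
    {F : E → E} (hF : ContDiff ℝ 1 F) {p q : ℝ → E} {a b t₀ : ℝ}
    (hp : ∀ t ∈ Icc a b, HasDerivAt p (F (p t)) t)
    (hq : ∀ t ∈ Icc a b, HasDerivAt q (F (q t)) t)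
    (ht₀ : t₀ ∈ Icc a b) (h : p t₀ = q t₀) : EqOn p q (Icc a b) := by
  have hpc : ContinuousOn p (Icc a b) := fun t ht => (hp t ht).continuousAt.continuousWithinAt
  have hqc : ContinuousOn q (Icc a b) := fun t ht => (hq t ht).continuousAt.continuousWithinAt
  -- `F` is only locally Lipschitz, so work on the compact set swept out by both curves
  obtain ⟨K, hK⟩ := hF.locallyLipschitz.locallyLipschitzOn.exists_lipschitzOnWith_of_compact
    ((isCompact_Icc.image_of_continuousOn hpc).union (isCompact_Icc.image_of_continuousOn hqc))
  have hpK : ∀ t ∈ Icc a b, p t ∈ p '' Icc a b ∪ q '' Icc a b :=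
    fun t ht => Or.inl (mem_image_of_mem p ht)
  have hqK : ∀ t ∈ Icc a b, q t ∈ p '' Icc a b ∪ q '' Icc a b :=
    fun t ht => Or.inr (mem_image_of_mem q ht)
  have hleft : Icc a t₀ ⊆ Icc a b := Icc_subset_Icc_right ht₀.2
  have hright : Icc t₀ b ⊆ Icc a b := Icc_subset_Icc_left ht₀.1
  rw [← Icc_union_Icc_eq_Icc ht₀.1 ht₀.2]
  refine EqOn.union ?_ ?_
  · exact ODE_solution_unique_of_mem_Icc_left (v := fun _ => F) (fun _ _ => hK)
      (hpc.mono hleft) (fun t ht => (hp t (hleft (Ioc_subset_Icc_self ht))).hasDerivWithinAt)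
      (fun t ht => hpK t (hleft (Ioc_subset_Icc_self ht)))
      (hqc.mono hleft) (fun t ht => (hq t (hleft (Ioc_subset_Icc_self ht))).hasDerivWithinAt)
      (fun t ht => hqK t (hleft (Ioc_subset_Icc_self ht))) h
  · exact ODE_solution_unique_of_mem_Icc_right (v := fun _ => F) (fun _ _ => hK)
      (hpc.mono hright) (fun t ht => (hp t (hright (Ico_subset_Icc_self ht))).hasDerivWithinAt)
      (fun t ht => hpK t (hright (Ico_subset_Icc_self ht)))
      (hqc.mono hright) (fun t ht => (hq t (hright (Ico_subset_Icc_self ht))).hasDerivWithinAt)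
      (fun t ht => hqK t (hright (Ico_subset_Icc_self ht))) h

theorem exists_first_zero {f : ℝ → ℝ} {a b : ℝ} (hab : a ≤ b) (hf : ContinuousOn f (Icc a b))
    (ha : 0 < f a) (hb : f b ≤ 0) : ∃ c ∈ Ioc a b, f c = 0 ∧ ∀ x ∈ Ico a c, 0 < f x := by
  set S := Icc a b ∩ f ⁻¹' Iic 0
  have hS : IsClosed S := hf.preimage_isClosed_of_isClosed isClosed_Icc isClosed_Iic
  have hSb : BddBelow S := ⟨a, fun x hx => hx.1.1⟩
  have hc : sInf S ∈ S := hS.csInf_mem ⟨b, ⟨hab, le_rfl⟩, hb⟩ hSb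
  have hbefore : ∀ x ∈ Ico a (sInf S), 0 < f x := fun x hx => by
    by_contra! hfx
    exact (csInf_le hSb ⟨⟨hx.1, hx.2.le.trans hc.1.2⟩, hfx⟩).not_gt hx.2
  have hac : a < sInf S := hc.1.1.lt_of_ne fun h => (hc.2.trans_lt (h ▸ ha)).false
  obtain ⟨x, hx, hfx⟩ := intermediate_value_Icc' hac.le (hf.mono (Icc_subset_Icc_right hc.1.2))
    ⟨hc.2, ha.le⟩
  have hxc : x = sInf S := by
    by_contra hne
    exact (hbefore x ⟨hx.1, hx.2.lt_of_ne hne⟩).ne' hfx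
  exact ⟨sInf S, ⟨hac, hc.1.2⟩, hxc ▸ hfx, hbefore⟩

theorem HasDerivAt.nonpos_of_forall_Ico_le {f : ℝ → ℝ} {f' a c : ℝ} (hf : HasDerivAt f f' c)
    (hac : a < c) (h : ∀ y ∈ Ico a c, f c ≤ f y) : f' ≤ 0 := by
  refine le_of_tendsto ((hasDerivAt_iff_tendsto_slope.mp hf).mono_left
    (nhdsLT_le_nhdsNE c)) ?_
  filter_upwards [Ioo_mem_nhdsLT hac] with y hy
  rw [slope_def_field]
  exact div_nonpos_of_nonneg_of_nonpos (sub_nonneg.mpr (h y ⟨hy.1.le, hy.2⟩))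
    (sub_nonpos.mpr hy.2.le)

theorem HasDerivAt.nonneg_of_forall_Ioc_le {f : ℝ → ℝ} {f' b c : ℝ} (hf : HasDerivAt f f' c)
    (hcb : c < b) (h : ∀ y ∈ Ioc c b, f c ≤ f y) : 0 ≤ f' := by
  refine ge_of_tendsto ((hasDerivAt_iff_tendsto_slope.mp hf).mono_left
    (nhdsGT_le_nhdsNE c)) ?_
  filter_upwards [Ioo_mem_nhdsGT hcb] with y hy
  rw [slope_def_field]
  exact div_nonneg (sub_nonneg.mpr (h y ⟨hy.1, hy.2.le⟩)) (sub_nonneg.mpr hy.1.le)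

theorem exists_eq_zero_and_deriv_nonpos {h h' : ℝ → ℝ} {a b : ℝ} (hab : a ≤ b)
    (hc : ContinuousOn h (Icc a b)) (hd : ∀ x ∈ Ioo a b, HasDerivAt h (h' x) x)
    (ha : 0 < h a) (hb : h b < 0) : ∃ x ∈ Ioo a b, h x = 0 ∧ h' x ≤ 0 := by
  obtain ⟨c, hc, hc0, hbefore⟩ := exists_first_zero hab hc ha hb.le
  have hcb : c < b := hc.2.lt_of_ne fun h => (h ▸ hb).ne hc0
  exact ⟨c, ⟨hc.1, hcb⟩, hc0, (hd c ⟨hc.1, hcb⟩).nonpos_of_forall_Ico_le hc.1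
    fun y hy => hc0 ▸ (hbefore y hy).le⟩

theorem exists_eq_and_deriv_le {f g f' g' : ℝ → ℝ} {a b : ℝ} (hab : a < b)
    (hf : ∀ x ∈ Icc a b, HasDerivAt f (f' x) x) (hg : ∀ x ∈ Icc a b, HasDerivAt g (g' x) x)
    (ha : f a = g a) (hb : ∀ x ∈ Ico a b, g x < f b) :
    ∃ x ∈ Ico a b, ∃ y ∈ Ico a b, f x = g y ∧ g' y ≤ f' x := by
  by_contra! hslow
  have hmid : a < (a + b) / 2 := by linarith
  obtain ⟨x₁, hx₁, hfgx₁⟩ : ∃ x₁ ∈ Ioo a b, f x₁ < g x₁ := by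
    by_contra! hle
    have hd := ((hf a ⟨le_rfl, hab.le⟩).sub (hg a ⟨le_rfl, hab.le⟩)).nonneg_of_forall_Ioc_le hmid
      fun y hy => by simpa [ha] using hle y ⟨hy.1, by linarith [hy.2]⟩
    linarith [hslow a ⟨le_rfl, hab⟩ a ⟨le_rfl, hab⟩ ha]
  have hx₁' : x₁ ∈ Icc a b := Ioo_subset_Icc_self hx₁
  -- Shift `f` to the left until it starts strictly below `g` at `x₁`; it still ends above `g`.
  obtain ⟨y₁, hfy₁, hy₁⟩ := (((hf x₁ hx₁').continuousAt.eventually_lt continuousAt_const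
    hfgx₁).filter_mono nhdsWithin_le_nhds |>.and (Ioo_mem_nhdsGT hx₁.2)).exists
  set η := y₁ - x₁
  have hη : 0 < η := sub_pos.mpr hy₁.1
  have hmem : ∀ x ∈ Icc x₁ (b - η), x ∈ Icc a b ∧ x + η ∈ Icc a b := fun x hx =>
    ⟨⟨by linarith [hx.1, hx₁.1], by linarith [hx.2]⟩,
      ⟨by linarith [hx.1, hx₁.1], by linarith [hx.2]⟩⟩
  have hd : ∀ x ∈ Icc x₁ (b - η),
      HasDerivAt (fun x => g x - f (x + η)) (g' x - f' (x + η)) x := fun x hx =>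
    (hg x (hmem x hx).1).sub ((hf _ (hmem x hx).2).comp_add_const x η)
  obtain ⟨x₀, hx₀, hfgx₀, hdx₀⟩ := exists_eq_zero_and_deriv_nonpos (h := fun x => g x - f (x + η))
    (by linarith [hy₁.2]) (fun x hx => (hd x hx).continuousAt.continuousWithinAt)
    (fun x hx => hd x (Ioo_subset_Icc_self hx))
    (by simp only [η, add_sub_cancel]; linarith)
    (by simp only [sub_add_cancel]; linarith [hb (b - η) ⟨by linarith [hy₁.2, hx₁.1], by linarith⟩])
  have hx₀' := hmem x₀ (Ioo_subset_Icc_self hx₀)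
  linarith [hslow (x₀ + η) ⟨hx₀'.2.1, by linarith [hx₀.2]⟩ x₀ ⟨hx₀'.1.1, by linarith [hx₀.2]⟩
    (by linarith)]

section Antiperiodic

variable {u : ℝ → ℝ} {z L : ℝ}

theorem eq_zero_iff_of_antiperiodic (hz : 0 < z) (hanti : ∀ x ∈ Icc 0 (L - z), u (x + z) = -u x)
    (h0 : u 0 = 0) (hpos : ∀ x ∈ Ioo 0 z, 0 < u x) {x : ℝ} (hx : x ∈ Icc 0 L) :
    u x = 0 ↔ ∃ k : ℕ, x = k * z := by
  have key : ∀ k : ℕ, ∀ x, k * z ≤ x → x < (k + 1) * z → x ≤ L → (u x = 0 ↔ x = k * z) := by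
    intro k
    induction k with
    | zero =>
      intro x h₁ h₂ _
      simp only [CharP.cast_eq_zero, zero_mul, zero_add, one_mul] at h₁ h₂ ⊢
      rcases h₁.eq_or_lt with rfl | hx0
      · simp [h0]
      · simp [(hpos x ⟨hx0, h₂⟩).ne', hx0.ne']
    | succ k ih =>
      intro x h₁ h₂ h₃
      push_cast at h₁ h₂ ⊢
      have hk : (0 : ℝ) ≤ k * z := by positivity
      have hshift := hanti (x - z) ⟨by linarith, by linarith⟩
      rw [sub_add_cancel] at hshift
      rw [hshift, neg_eq_zero, ih (x - z) (by linarith) (by linarith) (by linarith)]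
      constructor <;> intro h <;> linarith
  have hxz : 0 ≤ x / z := div_nonneg hx.1 hz.le
  have hfloor : (⌊x / z⌋₊ : ℝ) * z ≤ x := (le_div_iff₀ hz).mp (Nat.floor_le hxz)
  have hceil : x < (⌊x / z⌋₊ + 1) * z := (div_lt_iff₀ hz).mp (Nat.lt_floor_add_one _)
  rw [key _ x hfloor hceil hx.2]
  refine ⟨fun h => ⟨_, h⟩, ?_⟩
  rintro ⟨k, rfl⟩
  rw [mul_div_cancel_right₀ _ hz.ne', Nat.floor_natCast]

theorem ncard_zeros_of_antiperiodic (hz : 0 < z) (hanti : ∀ x ∈ Icc 0 (1 - z), u (x + z) = -u x)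
    (h0 : u 0 = 0) (h1 : u 1 = 0) (hpos : ∀ x ∈ Ioo 0 z, 0 < u x) :
    (({x ∈ Ioo (0 : ℝ) 1 | u x = 0}.ncard + 1 : ℕ) : ℝ) * z = 1 := by
  obtain ⟨N, hN⟩ := (eq_zero_iff_of_antiperiodic hz hanti h0 hpos ⟨zero_le_one, le_rfl⟩).mp h1
  have hzeros : {x ∈ Ioo (0 : ℝ) 1 | u x = 0} = (fun k : ℕ => (k : ℝ) * z) '' Ioo 0 N := by
    ext x
    simp only [mem_ofPred_eq, mem_image, mem_Ioo]
    constructor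
    · rintro ⟨hx, hux⟩
      obtain ⟨k, rfl⟩ :=
        (eq_zero_iff_of_antiperiodic hz hanti h0 hpos ⟨hx.1.le, hx.2.le⟩).mp hux
      refine ⟨k, ⟨?_, ?_⟩, rfl⟩
      · exact_mod_cast pos_of_mul_pos_left hx.1 hz.le
      · exact_mod_cast lt_of_mul_lt_mul_right (hN ▸ hx.2) hz.le
    · rintro ⟨k, ⟨hk0, hkN⟩, rfl⟩
      have hk : (k : ℝ) * z < N * z := mul_lt_mul_of_pos_right (by exact_mod_cast hkN) hz
      refine ⟨⟨by positivity, hN ▸ hk⟩, ?_⟩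
      exact (eq_zero_iff_of_antiperiodic hz hanti h0 hpos ⟨by positivity, by linarith⟩).mpr ⟨k, rfl⟩
  have hN1 : 1 ≤ N := by
    by_contra! h
    simp [Nat.lt_one_iff.mp h] at hN
  rw [hzeros, ncard_image_of_injective _ fun i j h => by exact_mod_cast mul_right_cancel₀ hz.ne' h,
    ← Finset.coe_Ioo, ncard_coe_finset, Nat.card_Ioo, Nat.sub_zero, Nat.sub_add_cancel hN1, ← hN]

end Antiperiodic

theorem strictMonoOn_two_sub_div_one_sub_sq :
    StrictMonoOn (fun t : ℝ => (2 - t) / (1 - t) ^ 2) (Iio 1) := by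
  intro s hs t ht hst
  have hs' : 0 < 1 - s := sub_pos.mpr hs
  have ht' : 0 < 1 - t := sub_pos.mpr ht
  rw [div_lt_div_iff₀ (by positivity) (by positivity)]
  nlinarith [mul_pos (sub_pos.mpr hst) (by positivity : 0 < (1 - s) * (1 - t) + (1 - s) + (1 - t))]

theorem mul_sq_eq_of_inv_sqrt_eq {κ a c : ℝ} (hX : 0 < 1 + κ * a ^ 2)
    (h : (√(1 + κ * a ^ 2))⁻¹ = 1 - c) : c < 1 ∧ κ * a ^ 2 = c * ((2 - c) / (1 - c) ^ 2) := by
  have hc : 0 < 1 - c := h ▸ inv_pos.mpr (Real.sqrt_pos.mpr hX)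
  refine ⟨sub_pos.mp hc, ?_⟩
  have hsq : (1 + κ * a ^ 2) * (1 - c) ^ 2 = 1 := by
    rw [← h, inv_pow, Real.sq_sqrt hX.le, mul_inv_cancel₀ hX.ne']
  field_simp
  linear_combination hsq

def phaseField (κ lam : ℝ) (p : ℝ × ℝ) : ℝ × ℝ :=
  (p.2, -(lam * p.1 * (1 + κ * p.2 ^ 2) ^ ((3 : ℝ) / 2)))

def phaseEnergy (κ lam : ℝ) (p : ℝ × ℝ) : ℝ :=
  (√(1 + κ * p.2 ^ 2))⁻¹ - κ * lam / 2 * p.1 ^ 2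

section PhaseField

variable {κ lam : ℝ}

theorem phaseField_contDiff (hκ : 0 ≤ κ) : ContDiff ℝ 1 (phaseField κ lam) := by
  have hpow : ContDiff ℝ 1 fun p : ℝ × ℝ => (1 + κ * p.2 ^ 2) ^ ((3 : ℝ) / 2) :=
    contDiff_iff_contDiffAt.mpr fun p =>
      (contDiff_const.add (contDiff_const.mul (contDiff_snd.pow 2))).contDiffAt.rpow_const_of_ne
        (by positivity)
  exact contDiff_snd.prodMk ((contDiff_const.mul contDiff_fst).mul hpow).neg

theorem sq_snd_eq_of_phaseEnergy_eq (hκ : κ ≠ 0) {p q : ℝ × ℝ} (hp : 0 < 1 + κ * p.2 ^ 2)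
    (hq : 0 < 1 + κ * q.2 ^ 2) (h : phaseEnergy κ lam p = phaseEnergy κ lam q)
    (h₁ : p.1 ^ 2 = q.1 ^ 2) : p.2 ^ 2 = q.2 ^ 2 := by
  rw [phaseEnergy, phaseEnergy, h₁, sub_left_inj, inv_inj, Real.sqrt_inj hp.le hq.le] at h
  exact mul_left_cancel₀ hκ (add_left_cancel h)

end PhaseField

theorem div_lt_div_of_phaseEnergy_eq {κ lam ξ₁ ξ₂ a₁ a₂ θ : ℝ} (hκ : 0 < κ) (hlam : 0 < lam)
    (hξ₁ : 0 < ξ₁) (hξ : ξ₁ < ξ₂) (hθ : θ ^ 2 < 1) (ha₁ : 0 < a₁) (ha₂ : 0 < a₂)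
    (he₁ : phaseEnergy κ lam (ξ₁ * θ, a₁) = phaseEnergy κ lam (ξ₁, 0))
    (he₂ : phaseEnergy κ lam (ξ₂ * θ, a₂) = phaseEnergy κ lam (ξ₂, 0)) :
    a₁ / ξ₁ < a₂ / ξ₂ := by
  set s := κ * lam / 2 * (1 - θ ^ 2)
  have hs : 0 < s := mul_pos (by positivity) (sub_pos.mpr hθ)
  have key : ∀ ξ a, 0 < ξ → phaseEnergy κ lam (ξ * θ, a) = phaseEnergy κ lam (ξ, 0) →
      s * ξ ^ 2 < 1 ∧ κ * (a / ξ) ^ 2 = s * ((2 - s * ξ ^ 2) / (1 - s * ξ ^ 2) ^ 2) := by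
    intro ξ a hξ he
    have hinv : (√(1 + κ * a ^ 2))⁻¹ = 1 - s * ξ ^ 2 := by
      simp only [phaseEnergy] at he
      rw [zero_pow two_ne_zero, mul_zero, add_zero, Real.sqrt_one, inv_one] at he
      linear_combination he
    obtain ⟨hlt, heq⟩ := mul_sq_eq_of_inv_sqrt_eq (by positivity) hinv
    refine ⟨hlt, ?_⟩
    rw [div_pow, mul_div_assoc', heq]
    field_simp
  obtain ⟨hlt₁, heq₁⟩ := key ξ₁ a₁ hξ₁ he₁
  obtain ⟨hlt₂, heq₂⟩ := key ξ₂ a₂ (hξ₁.trans hξ) he₂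
  have hsξ : s * ξ₁ ^ 2 < s * ξ₂ ^ 2 := mul_lt_mul_of_pos_left (by gcongr) hs
  have hsq : κ * (a₁ / ξ₁) ^ 2 < κ * (a₂ / ξ₂) ^ 2 := by
    rw [heq₁, heq₂]
    exact mul_lt_mul_of_pos_left (strictMonoOn_two_sub_div_one_sub_sq hlt₁ hlt₂ hsξ) hs
  have hpos₂ : 0 < a₂ / ξ₂ := div_pos ha₂ (hξ₁.trans hξ)
  exact (pow_lt_pow_iff_left₀ (div_pos ha₁ hξ₁).le hpos₂.le two_ne_zero).mp
    (lt_of_mul_lt_mul_left hsq hκ.le)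

structure IsQuarterWave (κ lam : ℝ) (u : ℝ → ℝ) (T : ℝ) : Prop where
  solODE : SolODE κ lam u 0 T
  zero : u 0 = 0
  deriv_pos : ∀ x ∈ Ico 0 T, 0 < deriv u x
  deriv_eq_zero : deriv u T = 0

namespace SolODE

variable {κ lam a b z : ℝ} {u : ℝ → ℝ}

theorem deriv_deriv_eq (hu : SolODE κ lam u a b) {t : ℝ} (ht : t ∈ Icc a b) :
    deriv (deriv u) t = -(lam * u t * (1 + κ * deriv u t ^ 2) ^ ((3 : ℝ) / 2)) := by
  rw [← hu.2.2.2.2 t ht, neg_neg]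

theorem mono {c d : ℝ} (hu : SolODE κ lam u a b) (h : Icc c d ⊆ Icc a b) :
    SolODE κ lam u c d :=
  ⟨fun x hx => hu.1 x (h hx), fun x hx => hu.2.1 x (h hx), hu.2.2.1.mono h,
    fun x hx => hu.2.2.2.1 x (h hx), fun x hx => hu.2.2.2.2 x (h hx)⟩

theorem hasDerivAt_phase (hu : SolODE κ lam u a b) {t : ℝ} (ht : t ∈ Icc a b) :
    HasDerivAt (fun s => (u s, deriv u s)) (phaseField κ lam (u t, deriv u t)) t :=
  (hu.1 t ht).hasDerivAt.prodMk (hu.deriv_deriv_eq ht ▸ (hu.2.1 t ht).hasDerivAt)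

theorem hasDerivAt_phaseEnergy (hu : SolODE κ lam u a b) {t : ℝ} (ht : t ∈ Icc a b) :
    HasDerivAt (fun s => phaseEnergy κ lam (u s, deriv u s)) 0 t := by
  have hX := hu.2.2.2.1 t ht
  have hS : 0 < √(1 + κ * deriv u t ^ 2) := Real.sqrt_pos.mpr hX
  have hd := ((((hasDerivAt_const t 1).add (((hu.2.1 t ht).hasDerivAt.pow 2).const_mul κ)).sqrt
    hX.ne').inv hS.ne').sub (((hu.1 t ht).hasDerivAt.pow 2).const_mul (κ * lam / 2))
  refine hd.congr_deriv ?_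
  have h32 : (1 + κ * deriv u t ^ 2) ^ ((3 : ℝ) / 2)
      = (1 + κ * deriv u t ^ 2) * √(1 + κ * deriv u t ^ 2) := by
    rw [show (3 : ℝ) / 2 = 1 + 1 / 2 by norm_num, Real.rpow_add hX, Real.rpow_one,
      Real.sqrt_eq_rpow]
  simp only [Pi.add_apply, Pi.pow_apply]
  rw [hu.deriv_deriv_eq ht, h32]
  set S := √(1 + κ * deriv u t ^ 2)
  rw [show 1 + κ * deriv u t ^ 2 = S ^ 2 from (Real.sq_sqrt hX.le).symm]
  field_simp
  ring

theorem phaseEnergy_eq (hu : SolODE κ lam u a b) {x y : ℝ} (hx : x ∈ Icc a b)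
    (hy : y ∈ Icc a b) :
    phaseEnergy κ lam (u x, deriv u x) = phaseEnergy κ lam (u y, deriv u y) :=
  have hconst := constant_of_has_deriv_right_zero
    (fun _ ht => (hu.hasDerivAt_phaseEnergy ht).continuousAt.continuousWithinAt)
    fun _ ht => (hu.hasDerivAt_phaseEnergy (Ico_subset_Icc_self ht)).hasDerivWithinAt
  (hconst x hx).trans (hconst y hy).symm

theorem hasDerivAt_phase_comp_const_sub (hu : SolODE κ lam u a b) {c t : ℝ}
    (ht : c - t ∈ Icc a b) :
    HasDerivAt (fun s => (u (c - s), -deriv u (c - s)))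
      (phaseField κ lam (u (c - t), -deriv u (c - t))) t := by
  have h₂ := ((hu.2.1 _ ht).hasDerivAt.comp_const_sub c t).neg
  rw [hu.deriv_deriv_eq ht, neg_neg] at h₂
  simpa [phaseField] using ((hu.1 _ ht).hasDerivAt.comp_const_sub c t).prodMk h₂

theorem hasDerivAt_neg_phase_comp_add_const (hu : SolODE κ lam u a b) {c t : ℝ}
    (ht : t + c ∈ Icc a b) :
    HasDerivAt (fun s => (-u (s + c), -deriv u (s + c)))
      (phaseField κ lam (-u (t + c), -deriv u (t + c))) t := by
  have h₂ := ((hu.2.1 _ ht).hasDerivAt.comp_add_const t c).neg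
  rw [hu.deriv_deriv_eq ht] at h₂
  simpa [phaseField] using ((hu.1 _ ht).hasDerivAt.comp_add_const t c).neg.prodMk h₂

theorem symm_of_deriv_eq_zero (hκ : 0 ≤ κ) (hu : SolODE κ lam u a b) {τ r : ℝ}
    (ha : a ≤ τ - r) (hb : τ + r ≤ b) (hτ : deriv u τ = 0) :
    ∀ t ∈ Icc (τ - r) (τ + r), u (2 * τ - t) = u t := by
  intro t ht
  have hsub : Icc (τ - r) (τ + r) ⊆ Icc a b := Icc_subset_Icc ha hb
  have heq := eqOn_of_hasDerivAt_of_contDiff (phaseField_contDiff (lam := lam) hκ)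
    (fun s hs => hu.hasDerivAt_phase (hsub hs))
    (fun s hs => hu.hasDerivAt_phase_comp_const_sub (c := 2 * τ)
      (hsub ⟨by linarith [hs.2], by linarith [hs.1]⟩))
    (t₀ := τ) ⟨by linarith [ht.1, ht.2], by linarith [ht.1, ht.2]⟩
    (by simp [two_mul, hτ]) ht
  exact (congrArg Prod.fst heq).symm

theorem antiperiodic (hκ : 0 ≤ κ) (hu : SolODE κ lam u a b) (hz : 0 ≤ z)
    (h₀ : u (a + z) = -u a) (h₁ : deriv u (a + z) = -deriv u a) :
    ∀ x ∈ Icc a (b - z), u (x + z) = -u x := by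
  intro x hx
  have heq := eqOn_of_hasDerivAt_of_contDiff (phaseField_contDiff (lam := lam) hκ)
    (fun s hs => hu.hasDerivAt_phase ⟨hs.1, by linarith [hs.2]⟩)
    (fun s hs => hu.hasDerivAt_neg_phase_comp_add_const (c := z)
      ⟨by linarith [hs.1], by linarith [hs.2]⟩)
    (t₀ := a) ⟨le_rfl, hx.1.trans hx.2⟩ (by simp [h₀, h₁]) hx
  linarith [congrArg Prod.fst heq]

theorem eq_half_of_deriv_eq_zero (hκ : 0 ≤ κ) (hu : SolODE κ lam u 0 z) (h0 : u 0 = 0)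
    (hz : u z = 0) (hpos : ∀ x ∈ Ioo 0 z, 0 < u x) {τ : ℝ} (hτ : τ ∈ Ioo 0 z)
    (hd : deriv u τ = 0) : τ = z / 2 := by
  rcases lt_trichotomy τ (z - τ) with h | h | h
  · have hsymm := hu.symm_of_deriv_eq_zero hκ (r := τ) (by linarith) (by linarith) hd 0
      ⟨by linarith, by linarith [hτ.1]⟩
    rw [sub_zero, h0] at hsymm
    exact absurd hsymm (hpos _ ⟨by linarith [hτ.1], by linarith⟩).ne'
  · linarith
  · have hsymm := hu.symm_of_deriv_eq_zero hκ (r := z - τ) (by linarith) (by linarith) hd z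
      ⟨by linarith [hτ.2], by linarith⟩
    rw [hz] at hsymm
    exact absurd hsymm (hpos _ ⟨by linarith, by linarith [hτ.2]⟩).ne'

theorem isQuarterWave_half (hκ : 0 < κ) (hu : SolODE κ lam u 0 z) (hz₀ : 0 < z) (h0 : u 0 = 0)
    (hz : u z = 0) (hpos : ∀ x ∈ Ioo 0 z, 0 < u x) (hd0 : deriv u 0 ≠ 0)
    (hdz : deriv u z ≠ 0) : IsQuarterWave κ lam u (z / 2) ∧ deriv u z = -deriv u 0 := by
  have hu' : ∀ x ∈ Icc 0 z, HasDerivAt u (deriv u x) x := fun x hx => (hu.1 x hx).hasDerivAt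
  have hd0pos : 0 < deriv u 0 := by
    refine lt_of_le_of_ne ((hu' 0 ⟨le_rfl, hz₀.le⟩).nonneg_of_forall_Ioc_le (half_pos hz₀)
      fun y hy => ?_) hd0.symm
    rw [h0]
    exact (hpos y ⟨hy.1, hy.2.trans_lt (half_lt_self hz₀)⟩).le
  have hdzneg : deriv u z < 0 := by
    refine lt_of_le_of_ne ((hu' z ⟨hz₀.le, le_rfl⟩).nonpos_of_forall_Ico_le (half_lt_self hz₀)
      fun y hy => ?_) hdz
    rw [hz]
    exact (hpos y ⟨(half_pos hz₀).trans_le hy.1, hy.2⟩).le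
  have hcont : ContinuousOn (deriv u) (Icc 0 z) :=
    fun x hx => (hu.2.1 x hx).continuousAt.continuousWithinAt
  have hcrit := fun τ hτ => hu.eq_half_of_deriv_eq_zero hκ.le h0 hz hpos (τ := τ) hτ
  obtain ⟨τ₀, hτ₀, hdτ₀⟩ := intermediate_value_Ioo' hz₀.le hcont ⟨hdzneg, hd0pos⟩
  have hderiv_pos : ∀ x ∈ Ico 0 (z / 2), 0 < deriv u x := by
    intro x hx
    by_contra! hdx
    obtain ⟨σ, hσ, hdσ⟩ := intermediate_value_Icc' hx.1
      (hcont.mono (Icc_subset_Icc_right (by linarith [hx.2]))) ⟨hdx, hd0pos.le⟩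
    have hσ0 : 0 < σ := hσ.1.lt_of_ne (by rintro rfl; exact hd0pos.ne' hdσ)
    linarith [hcrit σ ⟨hσ0, by linarith [hσ.2, hx.2]⟩ hdσ, hσ.2, hx.2]
  have hsq : deriv u z ^ 2 = deriv u 0 ^ 2 :=
    sq_snd_eq_of_phaseEnergy_eq (p := (u z, deriv u z)) (q := (u 0, deriv u 0)) hκ.ne'
      (hu.2.2.2.1 z ⟨hz₀.le, le_rfl⟩) (hu.2.2.2.1 0 ⟨le_rfl, hz₀.le⟩)
      (hu.phaseEnergy_eq ⟨hz₀.le, le_rfl⟩ ⟨le_rfl, hz₀.le⟩) (by simp [h0, hz])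
  refine ⟨⟨hu.mono (Icc_subset_Icc_right (half_le_self hz₀.le)), h0, hderiv_pos,
    hcrit τ₀ hτ₀ hdτ₀ ▸ hdτ₀⟩, ?_⟩
  rcases sq_eq_sq_iff_eq_or_eq_neg.mp hsq with h | h
  · linarith
  · exact h

end SolODE

theorem SPlus.isQuarterWave {κ lam : ℝ} {n : ℕ} {u : ℝ → ℝ} (hκ : 0 < κ) (hn : 1 ≤ n)
    (hu : SPlus κ lam n u) : IsQuarterWave κ lam u (1 / (2 * n)) := by
  obtain ⟨⟨hsol, h0, h1⟩, -, hcount, hsimple, δ, hδ, hpos⟩ := hu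
  set a := min (δ / 2) (1 / 2)
  have ha : 0 < a := lt_min (half_pos hδ) one_half_pos
  have haδ : a < δ := (min_le_left _ _).trans_lt (half_lt_self hδ)
  have ha1 : a < 1 := (min_le_right _ _).trans_lt one_half_lt_one
  obtain ⟨z, hz, hz0, hbefore⟩ := exists_first_zero ha1.le
    (fun x hx => (hsol.1 x ⟨ha.le.trans hx.1, hx.2⟩).continuousAt.continuousWithinAt)
    (hpos a ⟨ha, haδ⟩) h1.le
  have hz₀ : 0 < z := ha.trans hz.1
  have hposz : ∀ x ∈ Ioo 0 z, 0 < u x := fun x hx =>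
    (lt_or_ge x a).elim (fun h => hpos x ⟨hx.1, h.trans haδ⟩) fun h => hbefore x ⟨h, hx.2⟩
  obtain ⟨hwave, hdz⟩ := (hsol.mono (Icc_subset_Icc_right hz.2)).isQuarterWave_half hκ hz₀ h0 hz0
    hposz (hsimple 0 ⟨le_rfl, zero_le_one⟩ h0) (hsimple z ⟨hz₀.le, hz.2⟩ hz0)
  have hanti := hsol.antiperiodic hκ.le hz₀.le (by simp [h0, hz0]) (by simpa using hdz)
  have hnz := ncard_zeros_of_antiperiodic hz₀ hanti h0 h1 hposz
  rw [hcount, Nat.sub_add_cancel hn] at hnz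
  have hhalf : z / 2 = 1 / (2 * n) := by
    rw [← hnz]
    field_simp
  exact hhalf ▸ hwave

namespace IsQuarterWave

variable {κ lam T : ℝ} {u u₁ u₂ : ℝ → ℝ}

theorem strictMonoOn (hu : IsQuarterWave κ lam u T) : StrictMonoOn u (Icc 0 T) :=
  strictMonoOn_of_deriv_pos (convex_Icc 0 T)
    (fun x hx => (hu.solODE.1 x hx).continuousAt.continuousWithinAt)
    fun x hx => hu.deriv_pos x (Ioo_subset_Ico_self (interior_Icc (a := (0 : ℝ)) ▸ hx))

theorem phaseEnergy_eq_peak (hu : IsQuarterWave κ lam u T) {x : ℝ} (hx : x ∈ Icc 0 T) :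
    phaseEnergy κ lam (u x, deriv u x) = phaseEnergy κ lam (u T, 0) :=
  hu.deriv_eq_zero ▸ hu.solODE.phaseEnergy_eq hx ⟨hx.1.trans hx.2, le_rfl⟩

theorem peak_pos (hu : IsQuarterWave κ lam u T) (hT : 0 < T) : 0 < u T :=
  hu.zero ▸ hu.strictMonoOn ⟨le_rfl, hT.le⟩ ⟨hT.le, le_rfl⟩ hT

theorem div_peak_mem_Ico (hu : IsQuarterWave κ lam u T) {x : ℝ} (hx : x ∈ Ico 0 T) :
    u x / u T ∈ Ico 0 1 := by
  have hT := hu.peak_pos (hx.1.trans_lt hx.2)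
  have h0x := hu.zero ▸ hu.strictMonoOn.monotoneOn ⟨le_rfl, hx.1.trans hx.2.le⟩ ⟨hx.1, hx.2.le⟩ hx.1
  exact ⟨div_nonneg h0x hT.le,
    (div_lt_one hT).mpr (hu.strictMonoOn ⟨hx.1, hx.2.le⟩ ⟨hx.1.trans hx.2.le, le_rfl⟩ hx.2)⟩

theorem deriv_div_peak_lt (hκ : 0 < κ) (hlam : 0 < lam) (hu₁ : IsQuarterWave κ lam u₁ T)
    (hu₂ : IsQuarterWave κ lam u₂ T) (hlt : u₁ T < u₂ T) {x y : ℝ} (hx : x ∈ Ico 0 T)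
    (hy : y ∈ Ico 0 T) (hxy : u₁ x / u₁ T = u₂ y / u₂ T) :
    deriv u₁ x / u₁ T < deriv u₂ y / u₂ T := by
  obtain ⟨hθ₀, hθ₁⟩ := hu₁.div_peak_mem_Ico hx
  have hξ₁ := hu₁.peak_pos (hx.1.trans_lt hx.2)
  have he₁ := hu₁.phaseEnergy_eq_peak (Ico_subset_Icc_self hx)
  have he₂ := hu₂.phaseEnergy_eq_peak (Ico_subset_Icc_self hy)
  rw [← mul_div_cancel₀ (u₁ x) hξ₁.ne'] at he₁
  rw [← mul_div_cancel₀ (u₂ y) (hξ₁.trans hlt).ne', ← hxy] at he₂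
  exact div_lt_div_of_phaseEnergy_eq hκ hlam hξ₁ hlt (by nlinarith) (hu₁.deriv_pos x hx)
    (hu₂.deriv_pos y hy) he₁ he₂

theorem peak_eq (hκ : 0 < κ) (hlam : 0 < lam) (hT : 0 < T) (hu₁ : IsQuarterWave κ lam u₁ T)
    (hu₂ : IsQuarterWave κ lam u₂ T) : u₁ T = u₂ T := by
  suffices h : ∀ {v₁ v₂ : ℝ → ℝ}, IsQuarterWave κ lam v₁ T → IsQuarterWave κ lam v₂ T →
      ¬v₁ T < v₂ T from le_antisymm (not_lt.mp (h hu₂ hu₁)) (not_lt.mp (h hu₁ hu₂))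
  intro v₁ v₂ hv₁ hv₂ hlt
  obtain ⟨x, hx, y, hy, hxy, hle⟩ := exists_eq_and_deriv_le (f := fun x => v₁ x / v₁ T)
    (g := fun x => v₂ x / v₂ T) (f' := fun x => deriv v₁ x / v₁ T)
    (g' := fun x => deriv v₂ x / v₂ T) hT
    (fun x hx => (hv₁.solODE.1 x hx).hasDerivAt.div_const _)
    (fun x hx => (hv₂.solODE.1 x hx).hasDerivAt.div_const _) (by simp [hv₁.zero, hv₂.zero])
    fun x hx => by simpa [div_self (hv₁.peak_pos hT).ne'] using (hv₂.div_peak_mem_Ico hx).2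
  exact hle.not_gt (hv₁.deriv_div_peak_lt hκ hlam hv₂ hlt hx hy hxy)

end IsQuarterWave

theorem stmt6 (κ lam : ℝ) (hκ : 0 < κ) (hlam : 0 < lam) (n : ℕ) (hn : 1 ≤ n)
    (u₁ u₂ : ℝ → ℝ) (hu₁ : SPlus κ lam n u₁) (hu₂ : SPlus κ lam n u₂) :
    ∀ x ∈ Set.Icc (0 : ℝ) 1, u₁ x = u₂ x := by
  have hT : (0 : ℝ) < 1 / (2 * n) := by positivity
  have hT1 : 1 / (2 * n : ℝ) ≤ 1 := by
    rw [div_le_one (by positivity)]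
    linarith [(Nat.one_le_cast (α := ℝ)).mpr hn]
  have hw₁ := hu₁.isQuarterWave hκ hn
  have hw₂ := hu₂.isQuarterWave hκ hn
  have heq := eqOn_of_hasDerivAt_of_contDiff (phaseField_contDiff (lam := lam) hκ.le)
    (fun t ht => hu₁.1.1.hasDerivAt_phase ht) (fun t ht => hu₂.1.1.hasDerivAt_phase ht)
    ⟨hT.le, hT1⟩
    (Prod.ext (hw₁.peak_eq hκ hlam hT hw₂) (hw₁.deriv_eq_zero.trans hw₂.deriv_eq_zero.symm))
  exact fun x hx => congrArg Prod.fst (heq hx)
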